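/- arXiv:2202.09499 — 2 statements merged into one kernel-verified Lean document; each statement's English description precedes it below -/
import Mathlib

section
/- Let A be a unital associative k-algebra and consider the tensor algebra T_A(M) of an A-bimodule M. Then T_A(M)_♮ decomposes as a direct sum ⊕_{n≥0} (M^{⊗_A n})_♮, and the quotient T_A(M)/[T_A(M), T_A(M)] decomposes as ⊕_{n≥0} (M^{⊗_A n})_{♮, C_n}, where the cyclic group C_n acts on (M^{⊗_A n})_♮ by rotating tensor factors. -/
/- STATEMENT 17: For an `A`-bimodule `M`, the naturalization `T_A(M)_♮` of the
tensor algebra `T_A(M) = ⊕_{n≥0} M^{⊗_A n}` decomposes as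
`⊕_{n≥0} (M^{⊗_A n})_♮`, and the cyclic quotient
`T_A(M)_cyc = T_A(M)/[T_A(M), T_A(M)]` decomposes as
`⊕_{n≥0} (M^{⊗_A n})_{♮, C_n}`, where `C_n` acts by rotating tensor factors.

Everything is presented by generators and relations on
`T = ⊕_n P_n`, `P_0 = A`, `P_{n+1} = ⨂[k] (Fin (n+1)), M`:
tensoring over `A` is imposed by the internal balancing relations, `♮` by the
commutators with `A` (weight-`0` commutators and the wrap-around relations),
and `[T,T]` additionally by the transposition relations
`ξ ⊗ η − η ⊗ ξ` for pure tensors `ξ, η` of positive weight.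
`(M^{⊗_A n})_♮` is presented as in Statement 5 by the cyclically-indexed
balancing relations, and `(M^{⊗_A n})_{♮,C_n}` by further quotienting by the
rotation relations. -/

open scoped TensorProduct DirectSum

universe u

variable (k A M : Type u) [CommRing k] [Ring A] [Algebra k A]
  [AddCommGroup M] [Module k M]
  [Module A M] [Module Aᵐᵒᵖ M] [SMulCommClass A Aᵐᵒᵖ M]
  [IsScalarTower k A M] [IsScalarTower k Aᵐᵒᵖ M]

/-- The weight-`n` piece of the tensor algebra before imposing any relations:
`P 0 = A` and `P (n+1)` is the `(n+1)`-fold `k`-tensor power of `M`. -/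
def TAPiece : ℕ → Type u
  | 0 => A
  | n + 1 => ⨂[k] (_ : Fin (n + 1)), M

noncomputable instance TAPiece.addCommGroup : ∀ n, AddCommGroup (TAPiece k A M n)
  | 0 => inferInstanceAs (AddCommGroup A)
  | n + 1 => inferInstanceAs (AddCommGroup (⨂[k] (_ : Fin (n + 1)), M))

noncomputable instance TAPiece.module : ∀ n, Module k (TAPiece k A M n)
  | 0 => inferInstanceAs (Module k A)
  | n + 1 => inferInstanceAs (Module k (⨂[k] (_ : Fin (n + 1)), M))

/-- Commutators `ab − ba` in `A` (the weight-`0` piece). -/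
def commSet : Set A := {z : A | ∃ a b : A, z = a * b - b * a}

/-- The cyclically-indexed balancing relations on the `(n+1)`-fold tensor
power (internal `A`-balancing plus the wrap-around `♮`-commutator), as in
Statement 5. -/
def cycSet (n : ℕ) : Set (⨂[k] (_ : Fin (n + 1)), M) :=
  {z | ∃ (i : Fin (n + 1)) (a : A) (x : Fin (n + 1) → M),
    z = PiTensorProduct.tprod k
          (Function.update x i (MulOpposite.op a • x i)) -
        PiTensorProduct.tprod k
          (Function.update x (i + 1) (a • x (i + 1)))}

/-- The rotation relations `ξ − τ(ξ)` on the `(n+1)`-fold tensor power. -/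
def rotSet (n : ℕ) : Set (⨂[k] (_ : Fin (n + 1)), M) :=
  {z | ∃ x : Fin (n + 1) → M,
    z = PiTensorProduct.tprod k x -
        PiTensorProduct.tprod k (fun j => x (j - 1))}

/-- `(M^{⊗_A (n)})_♮` in each weight (weight `0` being `A/[A,A]`). -/
def natPiece : ℕ → Type u
  | 0 => A ⧸ Submodule.span k (commSet A)
  | n + 1 => (⨂[k] (_ : Fin (n + 1)), M) ⧸ Submodule.span k (cycSet k A M n)

noncomputable instance natPiece.addCommGroup : ∀ n, AddCommGroup (natPiece k A M n)
  | 0 => inferInstanceAs (AddCommGroup (A ⧸ Submodule.span k (commSet A)))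
  | n + 1 => inferInstanceAs (AddCommGroup
      ((⨂[k] (_ : Fin (n + 1)), M) ⧸ Submodule.span k (cycSet k A M n)))

noncomputable instance natPiece.module : ∀ n, Module k (natPiece k A M n)
  | 0 => inferInstanceAs (Module k (A ⧸ Submodule.span k (commSet A)))
  | n + 1 => inferInstanceAs (Module k
      ((⨂[k] (_ : Fin (n + 1)), M) ⧸ Submodule.span k (cycSet k A M n)))

/-- `(M^{⊗_A n})_{♮, C_n}`: additionally quotient by the rotation action. -/
def cycPiece : ℕ → Type u
  | 0 => A ⧸ Submodule.span k (commSet A)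
  | n + 1 => (⨂[k] (_ : Fin (n + 1)), M) ⧸
      Submodule.span k (cycSet k A M n ∪ rotSet k M n)

noncomputable instance cycPiece.addCommGroup : ∀ n, AddCommGroup (cycPiece k A M n)
  | 0 => inferInstanceAs (AddCommGroup (A ⧸ Submodule.span k (commSet A)))
  | n + 1 => inferInstanceAs (AddCommGroup
      ((⨂[k] (_ : Fin (n + 1)), M) ⧸
        Submodule.span k (cycSet k A M n ∪ rotSet k M n)))

noncomputable instance cycPiece.module : ∀ n, Module k (cycPiece k A M n)
  | 0 => inferInstanceAs (Module k (A ⧸ Submodule.span k (commSet A)))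
  | n + 1 => inferInstanceAs (Module k
      ((⨂[k] (_ : Fin (n + 1)), M) ⧸
        Submodule.span k (cycSet k A M n ∪ rotSet k M n)))

/-- The relations defining `T_A(M)` and its naturalization `T_A(M)_♮` inside
`T = ⊕_n P_n`: weight-`0` commutators, internal balancing relations, and the
wrap-around commutators with `A`. -/
def natRels : Set (⨁ n, TAPiece k A M n) :=
  {z | (∃ a b : A,
          z = DirectSum.of (TAPiece k A M) 0 (a * b) -
              DirectSum.of (TAPiece k A M) 0 (b * a)) ∨
       (∃ (n : ℕ) (i : Fin n) (a : A) (x : Fin (n + 1) → M),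
          z = DirectSum.of (TAPiece k A M) (n + 1)
                (PiTensorProduct.tprod k
                  (Function.update x i.castSucc
                    (MulOpposite.op a • x i.castSucc))) -
              DirectSum.of (TAPiece k A M) (n + 1)
                (PiTensorProduct.tprod k
                  (Function.update x i.succ (a • x i.succ)))) ∨
       (∃ (n : ℕ) (a : A) (x : Fin (n + 1) → M),
          z = DirectSum.of (TAPiece k A M) (n + 1)
                (PiTensorProduct.tprod k (Function.update x 0 (a • x 0))) -
              DirectSum.of (TAPiece k A M) (n + 1)
                (PiTensorProduct.tprod k
                  (Function.update x (Fin.last n)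
                    (MulOpposite.op a • x (Fin.last n)))))}

/-- The further transposition relations imposing `T_A(M)_cyc`: for pure
tensors `ξ` (weight `m+1`) and `η` (weight `p+1`),
`ξ ⊗ η − η ⊗ ξ ∈ [T_A(M), T_A(M)]`. -/
def cycRels : Set (⨁ n, TAPiece k A M n) :=
  natRels k A M ∪
    {z | ∃ (m p : ℕ) (x : Fin (m + 1) → M) (y : Fin (p + 1) → M),
      z = DirectSum.of (TAPiece k A M) ((m + 1) + (p + 1))
            (PiTensorProduct.tprod k (Fin.append x y : Fin ((m + 1) + (p + 1)) → M)) -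
          DirectSum.of (TAPiece k A M) ((p + 1) + (m + 1))
            (PiTensorProduct.tprod k (Fin.append y x : Fin ((p + 1) + (m + 1)) → M))}


/-! The relations in `natRels` are homogeneous, and in each weight they are, up to sign, exactly
the cyclic balancing relations presenting `(M^{⊗_A n})_♮`: the internal ones at the indices
`castSucc j` and the wrap-around one at `Fin.last n`. So their span is the kernel of the direct
sum of the weightwise quotient maps, and the first isomorphism theorem gives the decomposition.

For the cyclic quotient, `ξ ⊗ η − η ⊗ ξ` with `η` of weight `p + 1` is the difference between a
tensor and its rotation by `p + 1` steps, hence a telescoping sum of one-step rotations.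
Conversely a one-step rotation is zero in weight `1`, and in higher weight it is the
transposition of the first factors with the last one. -/

open Fin.NatCast in
theorem Fin.append_swap_eq_append_sub {α : Type*} {m p : ℕ} (x : Fin (m + 1) → α)
    (y : Fin (p + 1) → α) (j : Fin ((p + 1) + (m + 1))) :
    Fin.append y x j =
      Fin.append x y (Fin.cast (Nat.add_comm _ _) j - ((p + 1 : ℕ) : Fin _)) := by
  refine Fin.addCases (fun i => ?_) (fun i => ?_) j
  · rw [Fin.append_left, ← Fin.append_right x y i]
    congr 1
    rw [eq_sub_iff_add_eq]
    ext
    simp only [Fin.val_natAdd, Fin.val_add, Fin.val_cast, Fin.val_castAdd, Fin.val_natCast]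
    rw [Nat.mod_eq_of_lt (a := p + 1) (by omega),
      show m + 1 + i + (p + 1) = i + (m + 1 + (p + 1)) by omega, Nat.add_mod_right,
      Nat.mod_eq_of_lt (by omega)]
  · rw [Fin.append_right, ← Fin.append_left x y i]
    congr 1
    rw [eq_sub_iff_add_eq]
    ext
    simp only [Fin.val_natAdd, Fin.val_add, Fin.val_cast, Fin.val_castAdd, Fin.val_natCast]
    rw [Nat.mod_eq_of_lt (a := p + 1) (by omega), Nat.mod_eq_of_lt (by omega), Nat.add_comm]

namespace DirectSum

variable {R ι : Type*} [CommRing R] [DecidableEq ι] {P Q : ι → Type*}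
  [∀ i, AddCommGroup (P i)] [∀ i, Module R (P i)]
  [∀ i, AddCommGroup (Q i)] [∀ i, Module R (Q i)]

theorem of_sub_of_mem_iSup_map_lof (S : ∀ i, Submodule R (P i)) {i : ι} {x y : P i}
    (h : x - y ∈ S i) : of P i x - of P i y ∈ ⨆ i, (S i).map (lof R ι P i) := by
  rw [← map_sub]
  exact Submodule.mem_iSup_of_mem i (Submodule.mem_map_of_mem h)

theorem ker_lmap_eq_iSup_map_lof (f : ∀ i, P i →ₗ[R] Q i) :
    LinearMap.ker (lmap f) = ⨆ i, (LinearMap.ker (f i)).map (lof R ι P i) := by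
  classical
  refine le_antisymm (fun z hz => ?_) (iSup_le fun i => ?_)
  · rw [← sum_support_of z]
    refine Submodule.sum_mem _ fun i _ => Submodule.mem_iSup_of_mem i ⟨z i, ?_, rfl⟩
    simpa using congr($hz i)
  · rintro _ ⟨x, hx, rfl⟩
    rw [SetLike.mem_coe, LinearMap.mem_ker] at hx
    rw [LinearMap.mem_ker, lmap_lof, hx, map_zero]

theorem exists_quotient_equiv_of_eq_ker_lmap (f : ∀ i, P i →ₗ[R] Q i)
    (hf : ∀ i, Function.Surjective (f i)) {W : Submodule R (⨁ i, P i)}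
    (hW : W = LinearMap.ker (lmap f)) :
    ∃ e : ((⨁ i, P i) ⧸ W) ≃ₗ[R] ⨁ i, Q i,
      ∀ i x, e (Submodule.Quotient.mk (of P i x)) = of Q i (f i x) := by
  subst hW
  exact ⟨(lmap f).quotKerEquivOfSurjective ((lmap_surjective f).2 hf), fun i x => lmap_of f i x⟩

end DirectSum

section TensorAlgebra

open DirectSum PiTensorProduct Fin.NatCast

omit [SMulCommClass A Aᵐᵒᵖ M] [IsScalarTower k A M] [IsScalarTower k Aᵐᵒᵖ M]

noncomputable def natPieceMk : ∀ n, TAPiece k A M n →ₗ[k] natPiece k A M n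
  | 0 => (Submodule.span k (commSet A)).mkQ
  | n + 1 => (Submodule.span k (cycSet k A M n)).mkQ

noncomputable def cycPieceMk : ∀ n, TAPiece k A M n →ₗ[k] cycPiece k A M n
  | 0 => (Submodule.span k (commSet A)).mkQ
  | n + 1 => (Submodule.span k (cycSet k A M n ∪ rotSet k M n)).mkQ

noncomputable def rotRels : ∀ n, Submodule k (TAPiece k A M n)
  | 0 => ⊥
  | n + 1 => Submodule.span k (rotSet k M n)

def transpositionRels : Set (⨁ n, TAPiece k A M n) :=
  {z | ∃ (m p : ℕ) (x : Fin (m + 1) → M) (y : Fin (p + 1) → M),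
    z = of (TAPiece k A M) ((m + 1) + (p + 1))
          (tprod k (Fin.append x y : Fin ((m + 1) + (p + 1)) → M)) -
        of (TAPiece k A M) ((p + 1) + (m + 1))
          (tprod k (Fin.append y x : Fin ((p + 1) + (m + 1)) → M))}

omit [Algebra k A] in
theorem cycRels_eq_union : cycRels k A M = natRels k A M ∪ transpositionRels k A M := rfl

theorem natPieceMk_surjective : ∀ n, Function.Surjective (natPieceMk k A M n)
  | 0 => Submodule.mkQ_surjective _
  | _ + 1 => Submodule.mkQ_surjective _

theorem cycPieceMk_surjective : ∀ n, Function.Surjective (cycPieceMk k A M n)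
  | 0 => Submodule.mkQ_surjective _
  | _ + 1 => Submodule.mkQ_surjective _

/- The instances of `TAPiece` are defined by recursion on the weight, so they agree with those of
`A` and of the tensor powers only up to unfolding. The spans below are therefore taken in
`TAPiece`, and differences are pushed through `of` by `of_zero_sub` and `of_succ_sub`. -/
theorem ker_natPieceMk_zero :
    LinearMap.ker (natPieceMk k A M 0) = Submodule.span k (commSet A : Set (TAPiece k A M 0)) :=
  Submodule.ker_mkQ _

theorem ker_natPieceMk_succ (n : ℕ) :
    LinearMap.ker (natPieceMk k A M (n + 1)) =
      Submodule.span k (cycSet k A M n : Set (TAPiece k A M (n + 1))) :=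
  Submodule.ker_mkQ _

theorem ker_cycPieceMk : ∀ n,
    LinearMap.ker (cycPieceMk k A M n) = LinearMap.ker (natPieceMk k A M n) ⊔ rotRels k A M n
  | 0 => (sup_bot_eq _).symm
  | n + 1 => by
    rw [ker_natPieceMk_succ]
    exact (Submodule.ker_mkQ _).trans (Submodule.span_union _ _)

section Rotation

omit [Algebra k A] [Module A M] [Module Aᵐᵒᵖ M]

theorem of_zero_sub (a b : A) :
    of (TAPiece k A M) 0 (a - b) = of _ 0 a - of _ 0 b :=
  map_sub _ _ _

theorem of_succ_sub {n : ℕ} (x y : ⨂[k] (_ : Fin (n + 1)), M) :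
    of (TAPiece k A M) (n + 1) (x - y) = of _ (n + 1) x - of _ (n + 1) y :=
  map_sub _ _ _

theorem of_tprod_eq_of_tprod_cast {a b : ℕ} (h : a = b) (x : Fin (b + 1) → M) :
    of (TAPiece k A M) (b + 1) (tprod k x) =
      of (TAPiece k A M) (a + 1) (⨂ₜ[k] j, x (Fin.cast (by omega) j)) := by
  subst h
  rfl

theorem tprod_sub_tprod_comp_sub_mem_span_rotSet (n : ℕ) (x : Fin (n + 1) → M) (s : ℕ) :
    tprod k x - (⨂ₜ[k] j, x (j - s)) ∈ Submodule.span k (rotSet k M n) := by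
  induction s with
  | zero => simp
  | succ s ih =>
    have hstep : (⨂ₜ[k] j, x (j - s)) - (⨂ₜ[k] j, x (j - 1 - s)) ∈
        Submodule.span k (rotSet k M n) :=
      Submodule.subset_span ⟨fun j => x (j - s), rfl⟩
    simp only [sub_sub, add_comm (1 : Fin (n + 1)), ← Nat.cast_succ] at hstep
    simpa using add_mem ih hstep

theorem of_tprod_append_swap (m p : ℕ) (x : Fin (m + 1) → M) (y : Fin (p + 1) → M) :
    of (TAPiece k A M) ((p + 1) + (m + 1))
        (tprod k (Fin.append y x : Fin ((p + 1) + (m + 1)) → M)) =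
      of (TAPiece k A M) ((m + 1) + (p + 1))
        (⨂ₜ[k] j, Fin.append x y (j - ((p + 1 : ℕ) : Fin _))) := by
  refine (of_tprod_eq_of_tprod_cast k A M (a := m + 1 + p) (b := p + 1 + m) (by omega) _).trans ?_
  simp_rw [Fin.append_swap_eq_append_sub x y]
  rfl

end Rotation

section Transpositions

omit [Module A M] [Module Aᵐᵒᵖ M]

theorem span_transpositionRels_le_iSup_map_lof_rotRels :
    Submodule.span k (transpositionRels k A M) ≤
      ⨆ n, (rotRels k A M n).map (lof k ℕ (TAPiece k A M) n) := by
  refine Submodule.span_le.2 ?_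
  rintro _ ⟨m, p, x, y, rfl⟩
  rw [SetLike.mem_coe, of_tprod_append_swap k A M m p]
  exact of_sub_of_mem_iSup_map_lof (rotRels k A M) (i := m + 1 + p + 1)
    (tprod_sub_tprod_comp_sub_mem_span_rotSet k M (m + 1 + p)
      (Fin.append x y : Fin ((m + 1) + (p + 1)) → M) (p + 1))

theorem of_mem_span_transpositionRels_of_mem_rotSet :
    ∀ (n : ℕ) {z}, z ∈ rotSet k M n →
      of (TAPiece k A M) (n + 1) z ∈ Submodule.span k (transpositionRels k A M)
  | 0, _, ⟨x, rfl⟩ => by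
    rw [show (fun j => x (j - 1)) = x from
        funext fun _ => congrArg x (Subsingleton.elim (α := Fin 1) _ _),
      of_succ_sub, sub_self]
    exact zero_mem _
  | m + 1, _, ⟨x, rfl⟩ => by
    have hx : Fin.append (Fin.init x) (fun _ : Fin 1 => x (Fin.last (m + 1))) = x := by
      rw [Fin.append_right_eq_snoc, Fin.snoc_init_self]
    have hmem : _ ∈ Submodule.span k (transpositionRels k A M) :=
      Submodule.subset_span ⟨m, 0, Fin.init x, fun _ => x (Fin.last (m + 1)), rfl⟩
    rw [of_tprod_append_swap k A M m 0, hx] at hmem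
    rw [of_succ_sub]
    simpa using hmem

theorem span_transpositionRels_eq_iSup_map_lof_rotRels :
    Submodule.span k (transpositionRels k A M) =
      ⨆ n, (rotRels k A M n).map (lof k ℕ (TAPiece k A M) n) := by
  refine le_antisymm (span_transpositionRels_le_iSup_map_lof_rotRels k A M) (iSup_le ?_)
  rintro (_ | n)
  · simp [rotRels]
  · refine Submodule.map_le_iff_le_comap.2 (Submodule.span_le.2 fun z hz => ?_)
    exact of_mem_span_transpositionRels_of_mem_rotSet k A M n hz

end Transpositions

theorem of_mem_span_natRels_of_mem_cycSet (n : ℕ) {z} (hz : z ∈ cycSet k A M n) :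
    of (TAPiece k A M) (n + 1) z ∈ Submodule.span k (natRels k A M) := by
  obtain ⟨i, a, x, rfl⟩ := hz
  rw [of_succ_sub]
  induction i using Fin.lastCases with
  | last =>
    rw [Fin.last_add_one, ← neg_sub]
    exact neg_mem (Submodule.subset_span (Or.inr (Or.inr ⟨n, a, x, rfl⟩)))
  | cast j =>
    rw [Fin.coeSucc_eq_succ]
    exact Submodule.subset_span (Or.inr (Or.inl ⟨n, j, a, x, rfl⟩))

theorem natRels_subset_ker_lmap :
    natRels k A M ⊆ LinearMap.ker (lmap (natPieceMk k A M)) := by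
  rw [ker_lmap_eq_iSup_map_lof]
  rintro _ (⟨a, b, rfl⟩ | ⟨n, i, a, x, rfl⟩ | ⟨n, a, x, rfl⟩)
  · refine of_sub_of_mem_iSup_map_lof (fun n => LinearMap.ker (natPieceMk k A M n)) ?_
    rw [ker_natPieceMk_zero k A M]
    exact Submodule.subset_span (M := TAPiece k A M 0) ⟨a, b, rfl⟩
  · refine of_sub_of_mem_iSup_map_lof (fun n => LinearMap.ker (natPieceMk k A M n)) ?_
    rw [ker_natPieceMk_succ k A M]
    exact Submodule.subset_span (M := TAPiece k A M (n + 1))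
      ⟨i.castSucc, a, x, by rw [Fin.coeSucc_eq_succ]; rfl⟩
  · rw [SetLike.mem_coe, ← neg_sub]
    refine neg_mem (of_sub_of_mem_iSup_map_lof (fun n => LinearMap.ker (natPieceMk k A M n)) ?_)
    rw [ker_natPieceMk_succ k A M]
    exact Submodule.subset_span (M := TAPiece k A M (n + 1))
      ⟨Fin.last n, a, x, by rw [Fin.last_add_one]; rfl⟩

theorem ker_lmap_le_span_natRels :
    LinearMap.ker (lmap (natPieceMk k A M)) ≤ Submodule.span k (natRels k A M) := by
  rw [ker_lmap_eq_iSup_map_lof]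
  refine iSup_le fun n => Submodule.map_le_iff_le_comap.2 ?_
  cases n with
  | zero =>
    rw [ker_natPieceMk_zero k A M]
    refine Submodule.span_le.2 ?_
    rintro _ ⟨a, b, rfl⟩
    show of (TAPiece k A M) 0 (a * b - b * a) ∈ Submodule.span k (natRels k A M)
    rw [of_zero_sub]
    exact Submodule.subset_span (Or.inl ⟨a, b, rfl⟩)
  | succ n =>
    rw [ker_natPieceMk_succ k A M]
    exact Submodule.span_le.2 fun z hz => of_mem_span_natRels_of_mem_cycSet k A M n hz

theorem span_natRels_eq_ker_lmap :
    Submodule.span k (natRels k A M) = LinearMap.ker (lmap (natPieceMk k A M)) :=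
  le_antisymm (Submodule.span_le.2 (natRels_subset_ker_lmap k A M)) (ker_lmap_le_span_natRels k A M)

theorem span_cycRels_eq_ker_lmap :
    Submodule.span k (cycRels k A M) = LinearMap.ker (lmap (cycPieceMk k A M)) := by
  rw [cycRels_eq_union, Submodule.span_union, span_natRels_eq_ker_lmap,
    span_transpositionRels_eq_iSup_map_lof_rotRels, ker_lmap_eq_iSup_map_lof,
    ker_lmap_eq_iSup_map_lof, ← iSup_sup_eq]
  simp_rw [ker_cycPieceMk, Submodule.map_sup]

end TensorAlgebra

theorem tensor_algebra_naturalization_decomposes :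
    -- T_A(M)_♮ ≅ ⊕_{n≥0} (M^{⊗_A n})_♮
    (∃ e : ((⨁ n, TAPiece k A M n) ⧸ Submodule.span k (natRels k A M))
          ≃ₗ[k] ⨁ n, natPiece k A M n,
      (∀ a : A,
        e (Submodule.Quotient.mk (DirectSum.of (TAPiece k A M) 0 a)) =
          DirectSum.of (natPiece k A M) 0 (Submodule.Quotient.mk a)) ∧
      (∀ (n : ℕ) (x : ⨂[k] (_ : Fin (n + 1)), M),
        e (Submodule.Quotient.mk (DirectSum.of (TAPiece k A M) (n + 1) x)) =
          DirectSum.of (natPiece k A M) (n + 1) (Submodule.Quotient.mk x))) ∧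
    -- T_A(M)_cyc ≅ ⊕_{n≥0} (M^{⊗_A n})_{♮,C_n}
    (∃ e : ((⨁ n, TAPiece k A M n) ⧸ Submodule.span k (cycRels k A M))
          ≃ₗ[k] ⨁ n, cycPiece k A M n,
      (∀ a : A,
        e (Submodule.Quotient.mk (DirectSum.of (TAPiece k A M) 0 a)) =
          DirectSum.of (cycPiece k A M) 0 (Submodule.Quotient.mk a)) ∧
      (∀ (n : ℕ) (x : ⨂[k] (_ : Fin (n + 1)), M),
        e (Submodule.Quotient.mk (DirectSum.of (TAPiece k A M) (n + 1) x)) =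
          DirectSum.of (cycPiece k A M) (n + 1) (Submodule.Quotient.mk x))) := by
  obtain ⟨e, he⟩ := DirectSum.exists_quotient_equiv_of_eq_ker_lmap (natPieceMk k A M)
    (natPieceMk_surjective k A M) (span_natRels_eq_ker_lmap k A M)
  obtain ⟨e', he'⟩ := DirectSum.exists_quotient_equiv_of_eq_ker_lmap (cycPieceMk k A M)
    (cycPieceMk_surjective k A M) (span_cycRels_eq_ker_lmap k A M)
  exact ⟨⟨e, he 0, fun n => he (n + 1)⟩, ⟨e', he' 0, fun n => he' (n + 1)⟩⟩
end

section
/- Let A be a dg algebra over a commutative ring k, and let sD̃ be the unique graded derivation of degree +1 on the tensor dg-category T_A(S(A)) (where S(A) = cone(Ω¹(A) → A⊗A)) determined by sD̃(f) = sDf for f ∈ A, sD̃(sDf) = 0, and sD̃(E) = 0 for the canonical element E = 1⊗1 ∈ A⊗A ⊂ S(A). Then the graded commutator of sD̃ with the intrinsic differential d satisfies [sD̃, d](ξ) = ξ·E − E·ξ for every ξ, i.e., [sD̃, d] = [−, E]. -/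
/-!
Both `[sD̃, d] = sD̃ ∘ d + d ∘ sD̃` and `[−, E]` are (ungraded) derivations of `T`: the first
because it is the graded commutator of two odd derivations, the second because `E` is a fixed
element. Two derivations agreeing on a generating set agree everywhere, so it suffices to compare
them on `f`, `sDf` and `E`, which is a direct computation from the defining formulas.
-/

theorem sign_add_odd {n : ℤ} (hn : Odd n) (i : ℤ) :
    ((((-1 : ℤˣ) ^ (i + n) : ℤˣ) : ℤ)) = -((((-1 : ℤˣ) ^ i : ℤˣ) : ℤ)) := by
  rw [zpow_add, hn.neg_one_zpow, mul_neg_one, Units.val_neg]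

theorem sign_smul_sign_smul (i : ℤ) {M : Type*} [AddCommGroup M] (x : M) :
    ((((-1 : ℤˣ) ^ i : ℤˣ) : ℤ)) • ((((-1 : ℤˣ) ^ i : ℤˣ) : ℤ)) • x = x := by
  rw [smul_smul, ← Units.val_mul, Int.units_mul_self, Units.val_one, one_smul]

section Leibniz

variable {k T : Type*} [CommRing k] [Ring T] [Algebra k T]

theorem map_one_eq_zero_of_leibniz {D : T →ₗ[k] T}
    (hD : ∀ x y, D (x * y) = D x * y + x * D y) : D 1 = 0 := by
  simpa using hD 1 1

theorem eqOn_adjoin_of_leibniz {D₁ D₂ : T →ₗ[k] T}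
    (h₁ : ∀ x y, D₁ (x * y) = D₁ x * y + x * D₁ y)
    (h₂ : ∀ x y, D₂ (x * y) = D₂ x * y + x * D₂ y)
    {s : Set T} (hs : Set.EqOn D₁ D₂ s) : Set.EqOn D₁ D₂ (Algebra.adjoin k s) := by
  intro x hx
  induction hx using Algebra.adjoin_induction with
  | mem x hx => exact hs hx
  | algebraMap r =>
    simp only [Algebra.algebraMap_eq_smul_one, map_smul, map_one_eq_zero_of_leibniz h₁,
      map_one_eq_zero_of_leibniz h₂]
  | add x y _ _ hx hy => rw [map_add, map_add, hx, hy]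
  | mul x y _ _ hx hy => rw [h₁, h₂, hx, hy]

theorem mulRight_sub_mulLeft_leibniz (e x y : T) :
    (LinearMap.mulRight k e - LinearMap.mulLeft k e) (x * y)
      = (LinearMap.mulRight k e - LinearMap.mulLeft k e) x * y
        + x * (LinearMap.mulRight k e - LinearMap.mulLeft k e) y := by
  simp only [LinearMap.sub_apply, LinearMap.mulRight_apply, LinearMap.mulLeft_apply]
  noncomm_ring

end Leibniz

/-- For odd `n` the Koszul sign `(-1) ^ (n * i)` of a degree-`n` derivation is `(-1) ^ i`. -/
structure IsOddDerivation {k T : Type*} [CommRing k] [Ring T] [Algebra k T]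
    (𝒯 : ℤ → Submodule k T) (n : ℤ) (D : T →ₗ[k] T) : Prop where
  odd : Odd n
  mem_of_mem : ∀ {i : ℤ} {x : T}, x ∈ 𝒯 i → D x ∈ 𝒯 (i + n)
  map_mul_of_mem : ∀ {i : ℤ} {x : T} (y : T), x ∈ 𝒯 i →
    D (x * y) = D x * y + ((((-1 : ℤˣ) ^ i : ℤˣ) : ℤ)) • (x * D y)

namespace IsOddDerivation

variable {k T : Type*} [CommRing k] [Ring T] [Algebra k T] {𝒯 : ℤ → Submodule k T}

theorem map_mul_of_map_eq_zero [GradedRing 𝒯] {n : ℤ} {D : T →ₗ[k] T}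
    (hD : IsOddDerivation 𝒯 n D) {y : T} (hy : D y = 0) (x : T) : D (x * y) = D x * y := by
  induction x using DirectSum.Decomposition.inductionOn 𝒯 with
  | zero => simp
  | homogeneous x => rw [hD.map_mul_of_mem y x.2, hy, mul_zero, smul_zero, add_zero]
  | add x x' hx hx' => rw [add_mul, map_add, hx, hx', map_add, add_mul]

theorem anticommutator_map_mul_of_mem {n₁ n₂ : ℤ} {D₁ D₂ : T →ₗ[k] T}
    (h₁ : IsOddDerivation 𝒯 n₁ D₁) (h₂ : IsOddDerivation 𝒯 n₂ D₂)
    {i : ℤ} {x : T} (hx : x ∈ 𝒯 i) (y : T) :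
    D₁ (D₂ (x * y)) + D₂ (D₁ (x * y))
      = (D₁ (D₂ x) + D₂ (D₁ x)) * y + x * (D₁ (D₂ y) + D₂ (D₁ y)) := by
  rw [h₂.map_mul_of_mem y hx, h₁.map_mul_of_mem y hx, map_add, map_add, map_zsmul, map_zsmul,
    h₁.map_mul_of_mem y (h₂.mem_of_mem hx), h₂.map_mul_of_mem y (h₁.mem_of_mem hx),
    h₁.map_mul_of_mem _ hx, h₂.map_mul_of_mem _ hx, sign_add_odd h₂.odd, sign_add_odd h₁.odd,
    smul_add, smul_add, sign_smul_sign_smul, sign_smul_sign_smul]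
  simp only [neg_smul, add_mul, mul_add]
  abel

theorem anticommutator_map_mul [GradedRing 𝒯] {n₁ n₂ : ℤ} {D₁ D₂ : T →ₗ[k] T}
    (h₁ : IsOddDerivation 𝒯 n₁ D₁) (h₂ : IsOddDerivation 𝒯 n₂ D₂) (x y : T) :
    (D₁ ∘ₗ D₂ + D₂ ∘ₗ D₁) (x * y)
      = (D₁ ∘ₗ D₂ + D₂ ∘ₗ D₁) x * y + x * (D₁ ∘ₗ D₂ + D₂ ∘ₗ D₁) y := by
  induction x using DirectSum.Decomposition.inductionOn 𝒯 with
  | zero => simp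
  | homogeneous x => exact anticommutator_map_mul_of_mem h₁ h₂ x.2 y
  | add x x' hx hx' =>
    rw [add_mul, map_add, hx, hx', map_add, add_mul, add_mul]
    abel

end IsOddDerivation

theorem commutator_of_sD_tilde_with_d_is_bracket_with_E_general
    (k A T : Type*) [CommRing k] [Ring A] [Algebra k A] [Ring T] [Algebra k T]
    (𝒯 : ℤ → Submodule k T) [GradedRing 𝒯]
    -- the intrinsic differential of A
    (dA : A →ₗ[k] A)
    -- the generators of T = T_A(S(A))
    (ι : A →ₐ[k] T)
    (SD : A →ₗ[k] T)
    (E : T) (hEdeg : E ∈ 𝒯 0)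
    (hgen : Algebra.adjoin k
      (Set.range ι ∪ Set.range SD ∪ {E}) = ⊤)
    -- the intrinsic differential d of T
    (d : T →ₗ[k] T)
    (hddeg : ∀ (i : ℤ) (ξ : T), ξ ∈ 𝒯 i → d ξ ∈ 𝒯 (i - 1))
    (hdLeib : ∀ (i : ℤ) (ξ η : T), ξ ∈ 𝒯 i →
      d (ξ * η) = d ξ * η + ((((-1 : ℤˣ) ^ i : ℤˣ) : ℤ)) • (ξ * d η))
    (hdι : ∀ f : A, d (ι f) = ι (dA f))
    (hdSD : ∀ f : A, d (SD f) = ι f * E - E * ι f - SD (dA f))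
    (hdE : d E = 0)
    -- the graded derivation sD̃ of degree +1
    (δ : T →ₗ[k] T)
    (hδdeg : ∀ (i : ℤ) (ξ : T), ξ ∈ 𝒯 i → δ ξ ∈ 𝒯 (i + 1))
    (hδLeib : ∀ (i : ℤ) (ξ η : T), ξ ∈ 𝒯 i →
      δ (ξ * η) = δ ξ * η + ((((-1 : ℤˣ) ^ i : ℤˣ) : ℤ)) • (ξ * δ η))
    (hδι : ∀ f : A, δ (ι f) = SD f)
    (hδSD : ∀ f : A, δ (SD f) = 0)
    (hδE : δ E = 0) :
    -- conclusion: [sD̃, d] = [−, E]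
    ∀ ξ : T, δ (d ξ) + d (δ ξ) = ξ * E - E * ξ := by
  have hd : IsOddDerivation 𝒯 (-1) d :=
    ⟨odd_neg_one, fun hx => by simpa [← sub_eq_add_neg] using hddeg _ _ hx,
      fun y hx => hdLeib _ _ y hx⟩
  have hδ : IsOddDerivation 𝒯 1 δ := ⟨odd_one, hδdeg _ _, fun y hx => hδLeib _ _ y hx⟩
  have hE_mul : ∀ x, δ (E * x) = E * δ x := fun x => by
    simpa [hδE] using hδLeib 0 E x hEdeg
  have hgenerators :
      Set.EqOn ⇑(δ ∘ₗ d + d ∘ₗ δ) ⇑(LinearMap.mulRight k E - LinearMap.mulLeft k E)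
        (Set.range ι ∪ Set.range SD ∪ {E}) := by
    rintro _ ((⟨f, rfl⟩ | ⟨f, rfl⟩) | rfl)
    · simp only [LinearMap.add_apply, LinearMap.comp_apply, LinearMap.sub_apply,
        LinearMap.mulRight_apply, LinearMap.mulLeft_apply, hdι, hδι, hdSD]
      abel
    · simp [hdSD, hδSD, hδι, hE_mul, hδ.map_mul_of_map_eq_zero hδE]
    · simp [hdE, hδE]
  intro ξ
  simpa using eqOn_adjoin_of_leibniz (hδ.anticommutator_map_mul hd)
    (mulRight_sub_mulLeft_leibniz E) hgenerators (hgen ▸ Algebra.mem_top : ξ ∈ _)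

theorem commutator_of_sD_tilde_with_d_is_bracket_with_E
    (k A T : Type*) [CommRing k] [Ring A] [Algebra k A] [Ring T] [Algebra k T]
    (𝒜 : ℤ → Submodule k A) [GradedRing 𝒜]
    (𝒯 : ℤ → Submodule k T) [GradedRing 𝒯]
    -- the intrinsic differential of A
    (dA : A →ₗ[k] A)
    (hdAdeg : ∀ (i : ℤ) (x : A), x ∈ 𝒜 i → dA x ∈ 𝒜 (i - 1))
    (hdA2 : dA ∘ₗ dA = 0)
    (hdALeib : ∀ (i : ℤ) (x y : A), x ∈ 𝒜 i →
      dA (x * y) = dA x * y + ((((-1 : ℤˣ) ^ i : ℤˣ) : ℤ)) • (x * dA y))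
    -- the generators of T = T_A(S(A))
    (ι : A →ₐ[k] T)
    (hιdeg : ∀ (i : ℤ) (x : A), x ∈ 𝒜 i → ι x ∈ 𝒯 i)
    (SD : A →ₗ[k] T)
    (hSDdeg : ∀ (i : ℤ) (x : A), x ∈ 𝒜 i → SD x ∈ 𝒯 (i + 1))
    (hSDLeib : ∀ (i : ℤ) (x y : A), x ∈ 𝒜 i →
      SD (x * y) = SD x * ι y + ((((-1 : ℤˣ) ^ i : ℤˣ) : ℤ)) • (ι x * SD y))
    (E : T) (hEdeg : E ∈ 𝒯 0)
    (hgen : Algebra.adjoin k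
      (Set.range ι ∪ Set.range SD ∪ {E}) = ⊤)
    -- the intrinsic differential d of T
    (d : T →ₗ[k] T)
    (hddeg : ∀ (i : ℤ) (ξ : T), ξ ∈ 𝒯 i → d ξ ∈ 𝒯 (i - 1))
    (hd2 : d ∘ₗ d = 0)
    (hdLeib : ∀ (i : ℤ) (ξ η : T), ξ ∈ 𝒯 i →
      d (ξ * η) = d ξ * η + ((((-1 : ℤˣ) ^ i : ℤˣ) : ℤ)) • (ξ * d η))
    (hdι : ∀ f : A, d (ι f) = ι (dA f))
    (hdSD : ∀ f : A, d (SD f) = ι f * E - E * ι f - SD (dA f))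
    (hdE : d E = 0)
    -- the graded derivation sD̃ of degree +1
    (δ : T →ₗ[k] T)
    (hδdeg : ∀ (i : ℤ) (ξ : T), ξ ∈ 𝒯 i → δ ξ ∈ 𝒯 (i + 1))
    (hδLeib : ∀ (i : ℤ) (ξ η : T), ξ ∈ 𝒯 i →
      δ (ξ * η) = δ ξ * η + ((((-1 : ℤˣ) ^ i : ℤˣ) : ℤ)) • (ξ * δ η))
    (hδι : ∀ f : A, δ (ι f) = SD f)
    (hδSD : ∀ f : A, δ (SD f) = 0)
    (hδE : δ E = 0) :
    -- conclusion: [sD̃, d] = [−, E]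
    ∀ ξ : T, δ (d ξ) + d (δ ξ) = ξ * E - E * ξ :=
  commutator_of_sD_tilde_with_d_is_bracket_with_E_general k A T 𝒯 dA ι SD E hEdeg hgen d hddeg
    hdLeib hdι hdSD hdE δ hδdeg hδLeib hδι hδSD hδE
end
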